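/- arXiv:1304.5351 — 2 statements merged into one kernel-verified Lean document; each statement's English description precedes it below -/
import Mathlib

section
/- For any real numbers α, β with α < 1, β < 1 and α + β > 1, there is a constant C such that for all positive integers n and all nonnegative integers m, the sum Σ_{x,y > m, x−y=n} x^{-α} y^{-β} is at most C · (n+m)^{1-α-β}. -/
/-!
Write `N = n + m`. Every summand is at most `N ^ (-α) * (y + 1) ^ (-β)`, and for `y ≥ N` it is at
most `(y + 1) ^ (-(α + β))`. Comparing with `∫ x ^ (-s) dx`, the first bound summed over `y < N`
gives `N ^ (1 - α - β) / (1 - β)` (as `β < 1`), the second summed over `y ≥ N` gives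
`N ^ (1 - α - β) / (α + β - 1)` (as `α + β > 1`).
-/

open Finset

lemma rpow_neg_mul_rpow_neg_le {a b x y α β : ℝ} (ha : 0 < a) (hb : 0 < b) (hax : a ≤ x)
    (hby : b ≤ y) (hα : 0 ≤ α) (hβ : 0 ≤ β) :
    x ^ (-α) * y ^ (-β) ≤ a ^ (-α) * b ^ (-β) :=
  mul_le_mul (Real.rpow_le_rpow_of_nonpos ha hax (by linarith))
    (Real.rpow_le_rpow_of_nonpos hb hby (by linarith))
    (Real.rpow_nonneg (hb.le.trans hby) _) (Real.rpow_nonneg ha.le _)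

lemma sum_range_rpow_neg_le_integral {a s : ℝ} (ha : 0 < a) (hs : 0 ≤ s) (k : ℕ) :
    ∑ i ∈ range k, (a + (i + 1 : ℕ)) ^ (-s) ≤ ∫ x in a..a + k, x ^ (-s) :=
  AntitoneOn.sum_le_integral fun _ hx _ _ hxy ↦
    Real.rpow_le_rpow_of_nonpos (ha.trans_le hx.1) hxy (by linarith)

lemma sum_range_rpow_neg_le {s : ℝ} (hs0 : 0 ≤ s) (hs1 : s < 1) (N : ℕ) :
    ∑ i ∈ range N, ((i + 1 : ℕ) : ℝ) ^ (-s) ≤ (N : ℝ) ^ (1 - s) / (1 - s) := by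
  rcases N with _ | k
  · simp [Real.zero_rpow (by linarith : (1 - s) ≠ 0)]
  have h1s : 0 < 1 - s := by linarith
  have hint : ∫ x in (1 : ℝ)..1 + k, x ^ (-s) = ((k + 1 : ℕ) ^ (1 - s) - 1) / (1 - s) := by
    rw [integral_rpow (Or.inl (by linarith)), Real.one_rpow]
    push_cast
    ring_nf
  have hsum : ∑ i ∈ range k, ((i + 1 + 1 : ℕ) : ℝ) ^ (-s)
      ≤ ((k + 1 : ℕ) ^ (1 - s) - 1) / (1 - s) := by
    convert hint ▸ sum_range_rpow_neg_le_integral one_pos hs0 k using 3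
    push_cast; ring
  have hfirst : 1 ≤ 1 / (1 - s) := by rw [le_div_iff₀ h1s]; linarith
  rw [sub_div] at hsum
  rw [sum_range_succ']
  simp only [zero_add, Nat.cast_one, Real.one_rpow]
  linarith

lemma sum_range_add_rpow_neg_le {a s : ℝ} (ha : 0 < a) (hs : 1 < s) (k : ℕ) :
    ∑ i ∈ range k, (a + (i + 1 : ℕ)) ^ (-s) ≤ a ^ (1 - s) / (s - 1) := by
  have h0 : (0 : ℝ) ∉ Set.uIcc a (a + k) := by
    rw [Set.uIcc_of_le (le_add_of_nonneg_right k.cast_nonneg)]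
    exact fun h ↦ ha.not_ge h.1
  have hint : ∫ x in a..a + k, x ^ (-s) = (a ^ (1 - s) - (a + k) ^ (1 - s)) / (s - 1) := by
    rw [integral_rpow (Or.inr ⟨by linarith, h0⟩), neg_add_eq_sub, ← neg_sub s 1, div_neg,
      ← neg_div, neg_sub]
  calc ∑ i ∈ range k, (a + (i + 1 : ℕ)) ^ (-s)
      ≤ (a ^ (1 - s) - (a + k) ^ (1 - s)) / (s - 1) :=
        hint ▸ sum_range_rpow_neg_le_integral ha (by linarith) k
    _ ≤ a ^ (1 - s) / (s - 1) :=
      div_le_div_of_nonneg_right (sub_le_self _ (by positivity)) (by linarith)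

lemma sum_range_rpow_neg_mul_rpow_neg_le {α β : ℝ} (hα : 0 ≤ α) (hβ0 : 0 ≤ β) (hβ1 : β < 1)
    (hαβ : 1 < α + β) {n m : ℕ} (hN : 0 < n + m) (k : ℕ) :
    ∑ y ∈ range k, ((n + m + 1 + y : ℕ) : ℝ) ^ (-α) * ((m + 1 + y : ℕ) : ℝ) ^ (-β)
      ≤ (1 / (1 - β) + 1 / (α + β - 1)) * ((n + m : ℕ) : ℝ) ^ (1 - α - β) := by
  set N : ℕ := n + m
  set f : ℕ → ℝ := fun y ↦ ((N + 1 + y : ℕ) : ℝ) ^ (-α) * ((m + 1 + y : ℕ) : ℝ) ^ (-β)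
  have hN' : (0 : ℝ) < N := by exact_mod_cast hN
  have hhead : ∀ y, f y ≤ (N : ℝ) ^ (-α) * ((y + 1 : ℕ) : ℝ) ^ (-β) := fun y ↦
    rpow_neg_mul_rpow_neg_le hN' (by positivity) (by push_cast; linarith)
      (by push_cast; linarith) hα hβ0
  have htail : ∀ i, f (N + i) ≤ ((N : ℝ) + (i + 1 : ℕ)) ^ (-(α + β)) := fun i ↦ by
    rw [neg_add, Real.rpow_add (by positivity)]
    exact rpow_neg_mul_rpow_neg_le (by positivity) (by positivity) (by push_cast; linarith)
      (by push_cast; linarith) hα hβ0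
  calc ∑ y ∈ range k, f y ≤ ∑ y ∈ range (N + k), f y :=
        sum_le_sum_of_subset_of_nonneg (range_subset_range.2 (by omega)) fun _ _ _ ↦ by positivity
    _ = ∑ y ∈ range N, f y + ∑ i ∈ range k, f (N + i) := sum_range_add f N k
    _ ≤ (N : ℝ) ^ (-α) * ((N : ℝ) ^ (1 - β) / (1 - β))
          + (N : ℝ) ^ (1 - (α + β)) / (α + β - 1) := by
        gcongr
        · grw [sum_le_sum fun y _ ↦ hhead y, ← mul_sum, sum_range_rpow_neg_le hβ0 hβ1 N]
        · grw [sum_le_sum fun i _ ↦ htail i, sum_range_add_rpow_neg_le hN' hαβ k]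
    _ = (1 / (1 - β) + 1 / (α + β - 1)) * (N : ℝ) ^ (1 - α - β) := by
        rw [mul_div_assoc', ← Real.rpow_add hN']
        ring_nf

theorem stmt_3 (α β : ℝ) (hα : α < 1) (hβ : β < 1) (hαβ : 1 < α + β) :
    ∃ C : ℝ, 0 < C ∧ ∀ n m : ℕ, 0 < n →
      ∑' y : ℕ, ((n + m + 1 + y : ℕ) : ℝ) ^ (-α) * ((m + 1 + y : ℕ) : ℝ) ^ (-β)
        ≤ C * ((n + m : ℕ) : ℝ) ^ (1 - α - β) := by
  have h1β : 0 < 1 - β := by linarith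
  have hαβ1 : 0 < α + β - 1 := by linarith
  refine ⟨1 / (1 - β) + 1 / (α + β - 1), by positivity, fun n m hn ↦ ?_⟩
  exact Real.tsum_le_of_sum_range_le (fun _ ↦ by positivity)
    (sum_range_rpow_neg_mul_rpow_neg_le (by linarith) (by linarith) hβ hαβ (by omega))
end

section
/- For every 2/3 < γ < 1 there exists a constant C (depending only on γ) such that for all positive integers r and nonnegative integers m, Σ_{x,y,z > m, x+y+z = r} (xyz)^{-γ} ≤ C (r+m)^{2−3γ}. -/
/-!
One of `x, y, z` is at least `r / 3 ≥ (r + m) / 6`, so `(x y z)^{-γ}` is at most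
`((r + m) / 6)^{-γ}` times the sum of the three pairwise products `(x y)^{-γ}, (y z)^{-γ}, (x z)^{-γ}`.
Summed over the triples, each of these three is at most `(∑_{1 ≤ t < r + m} t^{-γ})^2`, since a triple
is determined by any two of its coordinates, and `∑_{1 ≤ t < n} t^{-γ} ≤ n^{1-γ} / (1 - γ)`.
Altogether the sum is `O((r + m)^{-γ} (r + m)^{2 - 2γ}) = O((r + m)^{2 - 3γ})`.
-/

open Finset Real

/-- Pairs `(x, y)` encoding the triples `(x, y, r - x - y)` of integers `> m` summing to `r`. -/
def tripleCompositions (r m : ℕ) : Finset (ℕ × ℕ) :=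
  (Finset.Ico (m + 1) r ×ˢ Finset.Ico (m + 1) r).filter (fun q => m + q.1 + q.2 < r)

lemma mem_tripleCompositions {r m : ℕ} {q : ℕ × ℕ} :
    q ∈ tripleCompositions r m ↔ m < q.1 ∧ m < q.2 ∧ m + q.1 + q.2 < r := by
  simp only [tripleCompositions, mem_filter, mem_product, mem_Ico]
  omega

lemma three_mul_le_of_mem_tripleCompositions {r m : ℕ} {q : ℕ × ℕ}
    (hq : q ∈ tripleCompositions r m) :
    3 * (((r + m : ℕ) : ℝ) / 6) ≤ q.1 + q.2 + ((r - q.1 - q.2 : ℕ) : ℝ) := by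
  rw [mem_tripleCompositions] at hq
  have hsum : ((q.1 + q.2 + (r - q.1 - q.2) : ℕ) : ℝ) = r := by congr 1; omega
  have hmr : (m : ℝ) ≤ r := by exact_mod_cast (by omega : m ≤ r)
  push_cast at hsum ⊢
  linarith

/-- The discrete analogue of `∫_{t-1}^t s^{-γ} ds ≥ t^{-γ}`, from Bernoulli's inequality. -/
lemma one_sub_mul_rpow_neg_le_sub {γ t : ℝ} (hγ₀ : 0 ≤ γ) (hγ₁ : γ ≤ 1) (ht : 1 ≤ t) :
    (1 - γ) * t ^ (-γ) ≤ t ^ (1 - γ) - (t - 1) ^ (1 - γ) := by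
  have ht₀ : 0 < t := by linarith
  have hinv : t⁻¹ ≤ 1 := inv_le_one_of_one_le₀ ht
  have hbernoulli := rpow_one_add_le_one_add_mul_self (s := -t⁻¹) (by linarith)
    (p := 1 - γ) (by linarith) (by linarith)
  have hsplit : t - 1 = t * (1 + -t⁻¹) := by
    field_simp
    ring
  have hneg : t ^ (-γ) = t ^ (1 - γ) * t⁻¹ := by
    rw [← rpow_neg_one, ← rpow_add ht₀]
    ring_nf
  rw [hsplit, mul_rpow ht₀.le (by linarith), hneg]
  nlinarith [mul_le_mul_of_nonneg_left hbernoulli (rpow_nonneg ht₀.le (1 - γ))]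

lemma sum_Ico_one_rpow_neg_le {γ : ℝ} (hγ₀ : 0 ≤ γ) (hγ₁ : γ < 1) (n : ℕ) :
    ∑ t ∈ Ico 1 n, (t : ℝ) ^ (-γ) ≤ (n : ℝ) ^ (1 - γ) / (1 - γ) := by
  have hp : 0 < 1 - γ := by linarith
  set g : ℕ → ℝ := fun k => (k : ℝ) ^ (1 - γ)
  rw [le_div_iff₀ hp, sum_Ico_eq_sum_range, sum_mul]
  calc ∑ k ∈ range (n - 1), ((1 + k : ℕ) : ℝ) ^ (-γ) * (1 - γ)
      ≤ ∑ k ∈ range (n - 1), (g (k + 1) - g k) := by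
        gcongr with k
        have := one_sub_mul_rpow_neg_le_sub hγ₀ hγ₁.le (t := (k : ℝ) + 1) (by simp)
        simpa [g, add_comm, mul_comm] using this
    _ = g (n - 1) - g 0 := sum_range_sub g _
    _ ≤ g n := by
        simp only [g, Nat.cast_zero, zero_rpow hp.ne', sub_zero]
        gcongr
        omega

lemma sum_mul_le_sq_sum {ι α : Type*} {S : Finset ι} {s : Finset α} {f : α → ℝ}
    (hf : ∀ t ∈ s, 0 ≤ f t) {g : ι → α × α} (hg : ∀ q ∈ S, g q ∈ s ×ˢ s)
    (hinj : Set.InjOn g S) :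
    ∑ q ∈ S, f (g q).1 * f (g q).2 ≤ (∑ t ∈ s, f t) ^ 2 := by
  classical
  calc ∑ q ∈ S, f (g q).1 * f (g q).2 = ∑ p ∈ S.image g, f p.1 * f p.2 :=
        (sum_image (f := fun p => f p.1 * f p.2) hinj).symm
    _ ≤ ∑ p ∈ s ×ˢ s, f p.1 * f p.2 :=
        sum_le_sum_of_subset_of_nonneg (image_subset_iff.2 hg) fun p hp _ =>
          mul_nonneg (hf _ (mem_product.1 hp).1) (hf _ (mem_product.1 hp).2)
    _ = (∑ t ∈ s, f t) ^ 2 := by rw [sum_product, sq, sum_mul_sum]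

lemma sum_pairs_tripleCompositions_le {f : ℕ → ℝ} (hf : ∀ t, 0 ≤ f t) (r m : ℕ) :
    ∑ q ∈ tripleCompositions r m,
        (f q.1 * f q.2 + f q.2 * f (r - q.1 - q.2) + f q.1 * f (r - q.1 - q.2))
      ≤ 3 * (∑ t ∈ Ico 1 (r + m), f t) ^ 2 := by
  have h₁ := sum_mul_le_sq_sum (S := tripleCompositions r m) (s := Ico 1 (r + m))
    (fun t _ => hf t) (g := fun q => (q.1, q.2)) ?_ ?_
  have h₂ := sum_mul_le_sq_sum (S := tripleCompositions r m) (s := Ico 1 (r + m))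
    (fun t _ => hf t) (g := fun q => (q.2, r - q.1 - q.2)) ?_ ?_
  have h₃ := sum_mul_le_sq_sum (S := tripleCompositions r m) (s := Ico 1 (r + m))
    (fun t _ => hf t) (g := fun q => (q.1, r - q.1 - q.2)) ?_ ?_
  · rw [sum_add_distrib, sum_add_distrib]
    linarith
  all_goals first
    | intro q hq
      rw [mem_tripleCompositions] at hq
      simp only [mem_product, mem_Ico]
      omega
    | intro q hq q' hq' h
      rw [mem_coe, mem_tripleCompositions] at hq hq'
      simp only [Prod.mk.injEq] at h
      ext <;> omega

lemma rpow_neg_mul_le_of_three_mul_le {γ a x y z : ℝ} (hγ : 0 ≤ γ) (ha : 0 < a)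
    (hx : 0 ≤ x) (hy : 0 ≤ y) (hz : 0 ≤ z) (h : 3 * a ≤ x + y + z) :
    x ^ (-γ) * y ^ (-γ) * z ^ (-γ) ≤
      a ^ (-γ) * (x ^ (-γ) * y ^ (-γ) + y ^ (-γ) * z ^ (-γ) + x ^ (-γ) * z ^ (-γ)) := by
  have hle : ∀ w, a ≤ w → w ^ (-γ) ≤ a ^ (-γ) := fun w hw =>
    rpow_le_rpow_of_nonpos ha hw (by linarith)
  have hx' := rpow_nonneg hx (-γ)
  have hy' := rpow_nonneg hy (-γ)
  have hz' := rpow_nonneg hz (-γ)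
  have hlarge : a ≤ x ∨ a ≤ y ∨ a ≤ z := by
    by_contra! hsmall
    linarith
  rcases hlarge with hw | hw | hw <;> have := hle _ hw <;>
    nlinarith [mul_nonneg hx' hy', mul_nonneg hy' hz', mul_nonneg hx' hz',
      mul_nonneg (mul_nonneg hx' hy') hz']

theorem stmt_16 (γ : ℝ) (hγ₁ : 2 / 3 < γ) (hγ₂ : γ < 1) :
    ∃ C : ℝ, 0 < C ∧ ∀ r m : ℕ, 0 < r →
      ∑ q ∈ (Finset.Ico (m + 1) r ×ˢ Finset.Ico (m + 1) r).filter
          (fun q => m + q.1 + q.2 < r),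
        (q.1 : ℝ) ^ (-γ) * (q.2 : ℝ) ^ (-γ) * ((r - q.1 - q.2 : ℕ) : ℝ) ^ (-γ)
        ≤ C * ((r + m : ℕ) : ℝ) ^ (2 - 3 * γ) := by
  have hγ₀ : 0 ≤ γ := by linarith
  have hp : 0 < 1 - γ := by linarith
  refine ⟨3 * 6 ^ γ / (1 - γ) ^ 2, by positivity, fun r m hr => ?_⟩
  set R : ℝ := ((r + m : ℕ) : ℝ)
  have hR : 0 < R := Nat.cast_pos.2 (by omega)
  set f : ℕ → ℝ := fun t => (t : ℝ) ^ (-γ)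
  change ∑ q ∈ tripleCompositions r m, f q.1 * f q.2 * f (r - q.1 - q.2) ≤ _
  calc _ ≤ ∑ q ∈ tripleCompositions r m, (R / 6) ^ (-γ) *
          (f q.1 * f q.2 + f q.2 * f (r - q.1 - q.2) + f q.1 * f (r - q.1 - q.2)) :=
        sum_le_sum fun q hq => rpow_neg_mul_le_of_three_mul_le hγ₀ (by positivity)
          (Nat.cast_nonneg _) (Nat.cast_nonneg _) (Nat.cast_nonneg _)
          (three_mul_le_of_mem_tripleCompositions hq)
    _ ≤ (R / 6) ^ (-γ) * (3 * (R ^ (1 - γ) / (1 - γ)) ^ 2) := by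
        rw [← mul_sum]
        gcongr
        refine (sum_pairs_tripleCompositions_le (fun t => rpow_nonneg t.cast_nonneg _) r m).trans ?_
        gcongr
        exact sum_Ico_one_rpow_neg_le hγ₀ hγ₂ _
    _ = 3 * 6 ^ γ / (1 - γ) ^ 2 * (R ^ (-γ) * R ^ (1 - γ) * R ^ (1 - γ)) := by
        rw [div_rpow hR.le (by norm_num), rpow_neg (by norm_num : (0 : ℝ) ≤ 6)]
        field_simp
    _ = 3 * 6 ^ γ / (1 - γ) ^ 2 * R ^ (2 - 3 * γ) := by
        rw [← rpow_add hR, ← rpow_add hR]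
        ring_nf
end
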